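/- arXiv:2405.12737 — 4 statements merged into one kernel-verified Lean document; each statement's English description precedes it below -/
import Mathlib

section
/- Let z ∈ ℂ with Re(z) ≥ 0 and z ≠ 0, and let m ∈ ℤ_{≥0}. Then B(z, m + 1/2) = Σ_{ℓ=0}^∞ E_ℓ B(z + ℓ, m + 1), where E_ℓ = (2ℓ)!/(4^ℓ (ℓ!)²), and the series converges absolutely. -/
open Complex

/-- The Beta function `B(z,w) = Γ(z)Γ(w)/Γ(z+w)`. -/
noncomputable def complexBeta (z w : ℂ) : ℂ :=
  Complex.Gamma z * Complex.Gamma w / Complex.Gamma (z + w)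

/-- Coefficients of the power series expansion `(1-x)^{-1/2} = Σ_ℓ E_ℓ x^ℓ`. -/
noncomputable def Ecoeff (ℓ : ℕ) : ℝ :=
  (Nat.factorial (2 * ℓ) : ℝ) / (4 ^ ℓ * (Nat.factorial ℓ : ℝ) ^ 2)

/-!
For `0 < Re z` write `B(z, m + 1/2) = ∫₀¹ x^(z-1) (1-x)^m (1-x)^(-1/2) dx`, expand `(1-x)^(-1/2)`
by the binomial series `Σ E_ℓ x^ℓ` and integrate termwise; since `E_ℓ ≥ 0`, the partial sums are
dominated by the full sum, so dominated convergence applies. On the line `Re z = 0` the identity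
follows by continuity: `|B(u, m+1)| ≤ 1/|u|` for `Re u ≥ 0`, and `E_ℓ = O(ℓ^(-1/2))`, so the
`ℓ`-th term is `O(ℓ^(-3/2))` uniformly on `Re z ≥ 0`.
-/

open MeasureTheory Set Filter
open scoped Nat

lemma Ecoeff_succ (ℓ : ℕ) : Ecoeff (ℓ + 1) = Ecoeff ℓ * ((2 * ℓ + 1) / (2 * ℓ + 2)) := by
  simp only [Ecoeff, Nat.mul_succ, Nat.factorial_succ]
  push_cast
  field_simp
  ring

lemma Ecoeff_pos (ℓ : ℕ) : 0 < Ecoeff ℓ := by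
  unfold Ecoeff
  positivity

lemma factorial_mul_Ecoeff (ℓ : ℕ) :
    (ℓ ! : ℂ) * Ecoeff ℓ = (ascPochhammer ℂ ℓ).eval (1 / 2) := by
  induction ℓ with
  | zero => simp [Ecoeff]
  | succ ℓ ih =>
    rw [ascPochhammer_succ_eval, ← ih, Ecoeff_succ, Nat.factorial_succ]
    push_cast
    field_simp
    ring

lemma Ecoeff_eq_ringChoose (ℓ : ℕ) : (Ecoeff ℓ : ℂ) = Ring.choose ((1 / 2 : ℂ) + ℓ - 1) ℓ := by
  have h := Ring.factorial_nsmul_multichoose_eq_ascPochhammer (1 / 2 : ℂ) ℓ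
  rw [Polynomial.ascPochhammer_smeval_eq_eval, nsmul_eq_mul, ← factorial_mul_Ecoeff] at h
  rw [← Ring.multichoose_eq]
  exact (mul_left_cancel₀ (Nat.cast_ne_zero.2 (Nat.factorial_ne_zero ℓ)) h).symm

lemma hasSum_Ecoeff_mul_pow {x : ℝ} (hx : |x| < 1) :
    HasSum (fun ℓ => Ecoeff ℓ * x ^ ℓ) ((1 - x) ^ (-(1 / 2) : ℝ)) := by
  have hs := (one_div_one_sub_cpow_hasFPowerSeriesOnBall_zero (1 / 2)).hasSum (y := x)
    (by simpa [enorm_eq_nnnorm, ← NNReal.coe_lt_one] using hx)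
  have h1x : 0 ≤ 1 - x := by linarith [le_abs_self x]
  rw [← Complex.hasSum_ofReal]
  simpa [FormalMultilinearSeries.ofScalars_apply_eq, Ecoeff_eq_ringChoose, mul_comm,
    Real.rpow_neg h1x, Complex.ofReal_cpow h1x] using hs

lemma Ecoeff_sq_mul_le_one (ℓ : ℕ) : Ecoeff ℓ ^ 2 * (2 * ℓ + 1) ≤ 1 := by
  induction ℓ with
  | zero => simp [Ecoeff]
  | succ ℓ ih =>
    have hℓ : (0 : ℝ) < 2 * ℓ + 2 := by positivity
    calc Ecoeff (ℓ + 1) ^ 2 * (2 * (ℓ + 1 : ℕ) + 1)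
        = Ecoeff ℓ ^ 2 * (2 * ℓ + 1) * ((2 * ℓ + 1) * (2 * ℓ + 3) / (2 * ℓ + 2) ^ 2) := by
          rw [Ecoeff_succ]; push_cast; field_simp; ring
      _ ≤ 1 := mul_le_one₀ ih (by positivity) (by rw [div_le_one (by positivity)]; nlinarith)

lemma Ecoeff_div_le (ℓ : ℕ) : Ecoeff ℓ / ℓ ≤ ((ℓ : ℝ) ^ (3 / 2 : ℝ))⁻¹ := by
  rcases ℓ.eq_zero_or_pos with rfl | hℓ
  · simp
  have hℓ' : (0 : ℝ) < ℓ := by exact_mod_cast hℓ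
  have hsqrt : Ecoeff ℓ * √ℓ ≤ 1 := by
    refine (pow_le_one_iff_of_nonneg (mul_nonneg (Ecoeff_pos ℓ).le (Real.sqrt_nonneg _))
      two_ne_zero).1 ?_
    rw [mul_pow, Real.sq_sqrt hℓ'.le]
    nlinarith [Ecoeff_sq_mul_le_one ℓ, sq_nonneg (Ecoeff ℓ)]
  rw [show (3 / 2 : ℝ) = 1 + 1 / 2 by norm_num, Real.rpow_add hℓ', Real.rpow_one,
    ← Real.sqrt_eq_rpow]
  calc Ecoeff ℓ / ℓ = Ecoeff ℓ * √ℓ / (ℓ * √ℓ) := by field_simp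
    _ ≤ 1 / (ℓ * √ℓ) := by gcongr
    _ = (ℓ * √ℓ)⁻¹ := one_div _

lemma summable_Ecoeff_div : Summable fun ℓ : ℕ => Ecoeff ℓ / ℓ :=
  (Real.summable_nat_rpow_inv.2 (by norm_num)).of_nonneg_of_le
    (fun ℓ => div_nonneg (Ecoeff_pos ℓ).le ℓ.cast_nonneg) Ecoeff_div_le

lemma hasSum_integral_smul_of_hasSum_nonneg {α E : Type*} [MeasurableSpace α] {μ : Measure α}
    [NormedAddCommGroup E] [NormedSpace ℝ E] {g : ℕ → α → ℝ} {G : α → ℝ} {h : α → E}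
    (hg_nonneg : ∀ᵐ a ∂μ, ∀ n, 0 ≤ g n a) (hG : ∀ᵐ a ∂μ, HasSum (g · a) (G a))
    (hg_meas : ∀ n, AEStronglyMeasurable (g n) μ) (hh_meas : AEStronglyMeasurable h μ)
    (hGh : Integrable (fun a => G a • h a) μ) :
    HasSum (fun n => ∫ a, g n a • h a ∂μ) (∫ a, G a • h a ∂μ) := by
  refine hasSum_integral_of_dominated_convergence (fun n a => g n a * ‖h a‖)
    (fun n => (hg_meas n).smul hh_meas) (fun n => ?_) ?_ ?_ ?_
  · filter_upwards [hg_nonneg] with a ha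
    rw [norm_smul, Real.norm_of_nonneg (ha n)]
  · filter_upwards [hG] with a ha
    exact ha.summable.mul_right _
  · refine hGh.norm.congr ?_
    filter_upwards [hg_nonneg, hG] with a ha₀ ha
    rw [(ha.mul_right _).tsum_eq, norm_smul, Real.norm_of_nonneg (ha.nonneg ha₀)]
  · filter_upwards [hG] with a ha
    exact ha.smul_const (h a)

lemma complexBeta_eq_integral_Ioo {u v : ℂ} (hu : 0 < u.re) (hv : 0 < v.re) :
    complexBeta u v = ∫ x in Ioo (0 : ℝ) 1, (x : ℂ) ^ (u - 1) * (1 - (x : ℂ)) ^ (v - 1) := by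
  have hΓ : Gamma (u + v) ≠ 0 := Gamma_ne_zero_of_re_pos (by rw [add_re]; positivity)
  rw [complexBeta, Gamma_mul_Gamma_eq_betaIntegral hu hv, mul_div_cancel_left₀ _ hΓ,
    betaIntegral, intervalIntegral.integral_of_le zero_le_one, integral_Ioc_eq_integral_Ioo]

lemma integrableOn_betaIntegrand {u v : ℂ} (hu : 0 < u.re) (hv : 0 < v.re) :
    IntegrableOn (fun x : ℝ => (x : ℂ) ^ (u - 1) * (1 - (x : ℂ)) ^ (v - 1)) (Ioo 0 1) :=
  ((betaIntegral_convergent hu hv).def'.mono_set (by simp [Ioo_subset_Ioc_self]))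

lemma hasSum_Ecoeff_mul_complexBeta {z w : ℂ} (hz : 0 < z.re) (hw : 1 / 2 < w.re) :
    HasSum (fun ℓ : ℕ => (Ecoeff ℓ : ℂ) * complexBeta (z + ℓ) w) (complexBeta z (w - 1 / 2)) := by
  have hw₀ : 0 < w.re := by linarith
  have hw' : 0 < (w - 1 / 2).re := by
    simp only [sub_re, one_div, inv_re, re_ofNat, normSq_ofNat, div_self_mul_self', sub_pos]
    linarith
  have hzℓ (ℓ : ℕ) : 0 < (z + ℓ).re := by simp only [add_re, natCast_re]; positivity
  set h : ℝ → ℂ := fun x => (x : ℂ) ^ (z - 1) * (1 - (x : ℂ)) ^ (w - 1)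
  have hterm (ℓ : ℕ) : ∫ x in Ioo (0 : ℝ) 1, (Ecoeff ℓ * x ^ ℓ) • h x
      = Ecoeff ℓ * complexBeta (z + ℓ) w := by
    rw [complexBeta_eq_integral_Ioo (hzℓ ℓ) hw₀, ← integral_const_mul]
    refine setIntegral_congr_fun measurableSet_Ioo fun x hx => ?_
    have hx₀ : (x : ℂ) ≠ 0 := ofReal_ne_zero.2 hx.1.ne'
    simp only [h, Complex.real_smul, add_sub_right_comm z, cpow_add _ _ hx₀, cpow_natCast]
    push_cast
    ring
  have hlimit (x : ℝ) (hx : x ∈ Ioo 0 1) : ((1 - x) ^ (-(1 / 2) : ℝ)) • h x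
      = (x : ℂ) ^ (z - 1) * (1 - (x : ℂ)) ^ (w - 1 / 2 - 1) := by
    have hx₁ : 0 ≤ 1 - x := by linarith [hx.2]
    have hx₁' : (1 - x : ℂ) ≠ 0 := by exact_mod_cast (sub_pos.2 hx.2).ne'
    rw [Complex.real_smul, ofReal_cpow hx₁, show w - 1 / 2 - 1 = (w - 1) + (-(1 / 2)) by ring,
      cpow_add _ _ hx₁']
    push_cast
    ring
  have hsum := hasSum_integral_smul_of_hasSum_nonneg (μ := volume.restrict (Ioo 0 1)) (h := h)
    (g := fun ℓ x => Ecoeff ℓ * x ^ ℓ) (G := fun x => (1 - x) ^ (-(1 / 2) : ℝ))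
    ((ae_restrict_mem measurableSet_Ioo).mono fun x hx ℓ =>
      mul_nonneg (Ecoeff_pos ℓ).le (pow_nonneg hx.1.le ℓ))
    ((ae_restrict_mem measurableSet_Ioo).mono fun x hx =>
      hasSum_Ecoeff_mul_pow (abs_lt.2 ⟨by linarith [hx.1], hx.2⟩))
    (fun ℓ => by fun_prop) (integrableOn_betaIntegrand hz hw₀).aestronglyMeasurable
    ((integrableOn_betaIntegrand hz hw').congr_fun (fun x hx => (hlimit x hx).symm)
      measurableSet_Ioo)
  rwa [funext hterm, setIntegral_congr_fun measurableSet_Ioo hlimit,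
    ← complexBeta_eq_integral_Ioo hz hw'] at hsum

lemma ne_neg_natCast_of_re_nonneg {u : ℂ} (hu : 0 ≤ u.re) (hu₀ : u ≠ 0) (n : ℕ) : u ≠ -n := by
  rintro rfl
  obtain rfl : n = 0 := by simpa using hu
  simp at hu₀

lemma ne_neg_natCast_of_re_pos {u : ℂ} (hu : 0 < u.re) (n : ℕ) : u ≠ -n :=
  ne_neg_natCast_of_re_nonneg hu.le (by rintro rfl; simp at hu) n

lemma complexBeta_one_right {u : ℂ} (hu : ∀ n : ℕ, u ≠ -n) : complexBeta u 1 = u⁻¹ := by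
  have hu₀ : u ≠ 0 := by simpa using hu 0
  rw [complexBeta, Gamma_one, Gamma_add_one u hu₀, mul_one,
    div_mul_cancel_right₀ (Gamma_ne_zero hu)]

lemma complexBeta_add_one_right (u : ℂ) {v : ℂ} (hv : v ≠ 0) (huv : u + v ≠ 0) :
    complexBeta u (v + 1) = v / (u + v) * complexBeta u v := by
  simp only [complexBeta, ← add_assoc, Gamma_add_one v hv, Gamma_add_one _ huv, div_eq_mul_inv,
    mul_inv]
  ring

lemma norm_complexBeta_natCast_add_one_le {u : ℂ} (hu : 0 ≤ u.re) (hu₀ : u ≠ 0) (m : ℕ) :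
    ‖complexBeta u (m + 1)‖ ≤ ‖u‖⁻¹ := by
  induction m with
  | zero => simp [complexBeta_one_right (ne_neg_natCast_of_re_nonneg hu hu₀)]
  | succ m ih =>
    have hre : (m + 1 : ℝ) ≤ ‖u + (m + 1 : ℂ)‖ :=
      le_trans (by rw [add_re, add_re, natCast_re, one_re]; linarith) (re_le_norm _)
    have hpos : 0 < ‖u + (m + 1 : ℂ)‖ := lt_of_lt_of_le (by positivity) hre
    have hratio : ‖(m + 1 : ℂ) / (u + (m + 1))‖ ≤ 1 := by
      rw [norm_div, div_le_one hpos]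
      exact_mod_cast hre
    rw [Nat.cast_succ, complexBeta_add_one_right u (by norm_cast)
      (norm_pos_iff.1 hpos), norm_mul]
    exact (mul_le_of_le_one_left (norm_nonneg _) hratio).trans ih

lemma norm_Ecoeff_mul_complexBeta_le {w : ℂ} (hw : 0 ≤ w.re) (m : ℕ) {ℓ : ℕ} (hℓ : ℓ ≠ 0) :
    ‖(Ecoeff ℓ : ℂ) * complexBeta (w + ℓ) (m + 1)‖ ≤ Ecoeff ℓ / ℓ := by
  have hℓ' : (0 : ℝ) < ℓ := by positivity
  have hre : (ℓ : ℝ) ≤ (w + ℓ).re := by rw [add_re, natCast_re]; linarith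
  have hnorm : (ℓ : ℝ) ≤ ‖w + ℓ‖ := hre.trans (re_le_norm _)
  rw [norm_mul, norm_real, Real.norm_of_nonneg (Ecoeff_pos ℓ).le, div_eq_mul_inv]
  exact mul_le_mul_of_nonneg_left ((norm_complexBeta_natCast_add_one_le (hℓ'.le.trans hre)
    (norm_pos_iff.1 (hℓ'.trans_le hnorm)) m).trans (inv_anti₀ hℓ' hnorm)) (Ecoeff_pos ℓ).le

lemma summable_norm_Ecoeff_mul_complexBeta {w : ℂ} (hw : 0 ≤ w.re) (m : ℕ) :
    Summable fun ℓ : ℕ => ‖(Ecoeff ℓ : ℂ) * complexBeta (w + ℓ) (m + 1)‖ :=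
  .of_norm_bounded_eventually_nat summable_Ecoeff_div <| (eventually_ne_atTop 0).mono
    fun _ hℓ => (norm_norm _).trans_le (norm_Ecoeff_mul_complexBeta_le hw m hℓ)

lemma continuousAt_complexBeta_left {u v : ℂ} (hu : ∀ n : ℕ, u ≠ -n)
    (huv : ∀ n : ℕ, u + v ≠ -n) : ContinuousAt (fun u => complexBeta u v) u :=
  ((differentiableAt_Gamma u hu).continuousAt.mul continuousAt_const).div
    ((differentiableAt_Gamma _ huv).continuousAt.comp (x := u)
      (continuousAt_id.add continuousAt_const))
    (Gamma_ne_zero huv)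

lemma continuousOn_complexBeta_left {v : ℂ} (hv : 0 < v.re) :
    ContinuousOn (fun w => complexBeta w v) {w | 0 ≤ w.re ∧ w ≠ 0} := fun w hw =>
  (continuousAt_complexBeta_left (ne_neg_natCast_of_re_nonneg hw.1 hw.2)
    (ne_neg_natCast_of_re_pos (by rw [add_re]; linarith [hw.1]))).continuousWithinAt

lemma continuousOn_tsum_Ecoeff_mul_complexBeta (m : ℕ) :
    ContinuousOn (fun w => ∑' ℓ : ℕ, (Ecoeff ℓ : ℂ) * complexBeta (w + ℓ) (m + 1))
      {w | 0 ≤ w.re ∧ w ≠ 0} := by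
  have hm : 0 < ((m : ℂ) + 1).re := by rw [add_re, natCast_re, one_re]; positivity
  have hhead := continuousOn_complexBeta_left hm
  have htail : ContinuousOn
      (fun w => ∑' ℓ : ℕ, (Ecoeff (ℓ + 1) : ℂ) * complexBeta (w + ↑(ℓ + 1)) (m + 1))
      {w | 0 ≤ w.re ∧ w ≠ 0} := by
    refine continuousOn_tsum (fun ℓ w hw => ?_) ((summable_nat_add_iff 1).2 summable_Ecoeff_div)
      fun ℓ w hw => norm_Ecoeff_mul_complexBeta_le hw.1 m ℓ.succ_ne_zero
    have hre : 0 < (w + ↑(ℓ + 1)).re := by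
      rw [add_re, natCast_re]; exact add_pos_of_nonneg_of_pos hw.1 (by positivity)
    have hre' : 0 < (w + ↑(ℓ + 1) + (m + 1)).re := by rw [add_re]; exact add_pos hre hm
    exact (continuousAt_const.mul ((continuousAt_complexBeta_left (ne_neg_natCast_of_re_pos hre)
      (ne_neg_natCast_of_re_pos hre')).comp (x := w)
      (continuousAt_id.add continuousAt_const))).continuousWithinAt
  refine (hhead.add htail).congr fun w hw => ?_
  rw [(summable_norm_Ecoeff_mul_complexBeta hw.1 m).of_norm.tsum_eq_zero_add]
  simp [Ecoeff]

theorem complexBeta_eq_tsum_Ecoeff_mul_complexBeta {z : ℂ} (hz : 0 ≤ z.re) (hz₀ : z ≠ 0)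
    (m : ℕ) :
    complexBeta z (m + 1 / 2) = ∑' ℓ : ℕ, (Ecoeff ℓ : ℂ) * complexBeta (z + ℓ) (m + 1) := by
  have heq : EqOn (fun w => complexBeta w (m + 1 / 2))
      (fun w => ∑' ℓ : ℕ, (Ecoeff ℓ : ℂ) * complexBeta (w + ℓ) (m + 1)) {w | 0 < w.re} := by
    intro w hw
    have hm : 1 / 2 < ((m : ℂ) + 1).re := by
      rw [add_re, natCast_re, one_re]; linarith [m.cast_nonneg (α := ℝ)]
    have hsum := (hasSum_Ecoeff_mul_complexBeta hw hm).tsum_eq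
    rwa [show (m : ℂ) + 1 - 1 / 2 = m + 1 / 2 by ring, eq_comm] at hsum
  have hm : 0 < ((m : ℂ) + 1 / 2).re := by
    rw [show (m : ℂ) + 1 / 2 = ((m + 1 / 2 : ℝ) : ℂ) by push_cast; ring, ofReal_re]
    positivity
  refine heq.of_subset_closure (continuousOn_complexBeta_left hm)
    (continuousOn_tsum_Ecoeff_mul_complexBeta m) (fun w hw => ⟨hw.le, by rintro rfl; simp at hw⟩)
    (fun w hw => ?_) ⟨hz, hz₀⟩
  rw [closure_setOfPred_lt_re]
  exact hw.1

theorem beta_half_integer_series (z : ℂ) (hz : 0 ≤ z.re) (hz0 : z ≠ 0) (m : ℕ) :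
    Summable (fun ℓ : ℕ => ‖(Ecoeff ℓ : ℂ) * complexBeta (z + ℓ) (m + 1)‖) ∧
    complexBeta z (m + 1/2) = ∑' ℓ : ℕ, (Ecoeff ℓ : ℂ) * complexBeta (z + ℓ) (m + 1) :=
  ⟨summable_norm_Ecoeff_mul_complexBeta hz m, complexBeta_eq_tsum_Ecoeff_mul_complexBeta hz hz0 m⟩
end

section
/- For every positive integer q and all r ≥ 0, ∫₀^r cosh(s)^q ds ≤ 2^{q + 1/2} + 2 cosh(r)^q / q. -/
open intervalIntegral Real

lemma cosh_pow_integral_deriv (q : ℕ) (a b : ℝ) :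
    ∫ s in a..b, (q : ℝ) * Real.cosh s ^ (q - 1) * Real.sinh s
      = Real.cosh b ^ q - Real.cosh a ^ q := by
  apply intervalIntegral.integral_eq_sub_of_hasDerivAt
  · intro x _
    exact (Real.hasDerivAt_cosh x).pow q
  · exact (Continuous.intervalIntegrable (by continuity) _ _)

lemma two_sinh_ge (x : ℝ) (hx : 1 ≤ x) : Real.cosh x ≤ 2 * Real.sinh x := by
  rw [Real.cosh_eq, Real.sinh_eq]
  have h1 : (3:ℝ) ≤ Real.exp (2 * x) := by
    have : Real.exp 2 ≤ Real.exp (2 * x) := Real.exp_le_exp.2 (by linarith)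
    have he : (2:ℝ) ≤ Real.exp 1 := by linarith [Real.add_one_le_exp (1:ℝ)]
    have : (3:ℝ) ≤ Real.exp 2 := by
      have h22 : Real.exp 2 = Real.exp 1 * Real.exp 1 := by
        rw [show (2:ℝ) = 1 + 1 by norm_num, Real.exp_add]
      nlinarith
    linarith
  have h2 : Real.exp (2 * x) = Real.exp x * Real.exp x := by
    rw [two_mul, Real.exp_add]
  have h3 : Real.exp (-x) = 1 / Real.exp x := by
    rw [Real.exp_neg]; ring
  have hpos := Real.exp_pos x
  rw [h3]
  rw [h2] at h1
  have h5 : 3 * (1 / Real.exp x) ≤ Real.exp x := by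
    have h4 := mul_le_mul_of_nonneg_right h1 (le_of_lt (one_div_pos.2 hpos))
    have h6 : Real.exp x * Real.exp x * (1 / Real.exp x) = Real.exp x := by field_simp
    linarith
  linarith

lemma cosh_one_le_two : Real.cosh 1 ≤ 2 := by
  rw [Real.cosh_eq]
  have h1 : Real.exp (1:ℝ) < 2.7182818286 := Real.exp_one_lt_d9
  have h2 : Real.exp (-1:ℝ) ≤ 1 := by
    rw [Real.exp_le_one_iff]; norm_num
  linarith

theorem cosh_pow_integral_bound (q : ℕ) (hq : 1 ≤ q) (r : ℝ) (hr : 0 ≤ r) :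
    ∫ s in (0:ℝ)..r, Real.cosh s ^ q ≤
      (2:ℝ) ^ ((q : ℝ) + 1/2) + 2 * Real.cosh r ^ q / q := by
  have hqpos : (0:ℝ) < q := by exact_mod_cast hq
  have hcont : Continuous fun s : ℝ => Real.cosh s ^ q := Real.continuous_cosh.pow q
  have hpow2 : ((2:ℝ) ^ q : ℝ) ≤ (2:ℝ) ^ ((q : ℝ) + 1/2) := by
    rw [← Real.rpow_natCast 2 q]
    exact Real.rpow_le_rpow_of_exponent_le (by norm_num) (by linarith)
  have hcosh1 : Real.cosh 1 ^ q ≤ (2:ℝ) ^ q :=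
    pow_le_pow_left₀ (Real.cosh_pos 1).le cosh_one_le_two q
  have hrq : (0:ℝ) ≤ 2 * Real.cosh r ^ q / q :=
    div_nonneg (by positivity) (le_of_lt hqpos)
  rcases le_or_gt r 1 with hr1 | hr1
  · -- small r: integral ≤ r * cosh(1)^q ≤ 2^q
    have hmono : ∫ s in (0:ℝ)..r, Real.cosh s ^ q ≤ ∫ s in (0:ℝ)..r, Real.cosh 1 ^ q := by
      apply intervalIntegral.integral_mono_on hr
        (hcont.intervalIntegrable _ _) (intervalIntegrable_const)
      intro x hx
      apply pow_le_pow_left₀ (Real.cosh_pos _).le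
      apply Real.cosh_le_cosh.2
      rw [abs_of_nonneg hx.1, abs_of_nonneg (by norm_num : (0:ℝ) ≤ 1)]
      exact hx.2.trans hr1
    have : ∫ s in (0:ℝ)..r, Real.cosh 1 ^ q = r * Real.cosh 1 ^ q := by
      simp [intervalIntegral.integral_const, smul_eq_mul]
    rw [this] at hmono
    have : r * Real.cosh 1 ^ q ≤ (2:ℝ) ^ q := by
      calc r * Real.cosh 1 ^ q ≤ 1 * Real.cosh 1 ^ q := by
            apply mul_le_mul_of_nonneg_right hr1 (by positivity)
        _ = Real.cosh 1 ^ q := one_mul _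
        _ ≤ (2:ℝ) ^ q := hcosh1
    linarith
  · -- r > 1: split at 1
    have hsplit : (∫ s in (0:ℝ)..1, Real.cosh s ^ q) + (∫ s in (1:ℝ)..r, Real.cosh s ^ q)
        = ∫ s in (0:ℝ)..r, Real.cosh s ^ q :=
      intervalIntegral.integral_add_adjacent_intervals
        (hcont.intervalIntegrable _ _) (hcont.intervalIntegrable _ _)
    have h01 : (∫ s in (0:ℝ)..1, Real.cosh s ^ q) ≤ (2:ℝ) ^ ((q : ℝ) + 1/2) := by
      have hmono : ∫ s in (0:ℝ)..1, Real.cosh s ^ q ≤ ∫ s in (0:ℝ)..1, Real.cosh 1 ^ q := by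
        apply intervalIntegral.integral_mono_on (by norm_num)
          (hcont.intervalIntegrable _ _) (intervalIntegrable_const)
        intro x hx
        apply pow_le_pow_left₀ (Real.cosh_pos _).le
        apply Real.cosh_le_cosh.2
        rw [abs_of_nonneg hx.1, abs_of_nonneg (by norm_num : (0:ℝ) ≤ 1)]
        exact hx.2
      have : ∫ s in (0:ℝ)..1, Real.cosh 1 ^ q = Real.cosh 1 ^ q := by
        simp
      rw [this] at hmono
      exact hmono.trans (hcosh1.trans hpow2)
    have h1r : (∫ s in (1:ℝ)..r, Real.cosh s ^ q) ≤ 2 * Real.cosh r ^ q / q := by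
      have hmono : ∫ s in (1:ℝ)..r, Real.cosh s ^ q
          ≤ ∫ s in (1:ℝ)..r, (2 / q) * ((q : ℝ) * Real.cosh s ^ (q - 1) * Real.sinh s) := by
        apply intervalIntegral.integral_mono_on hr1.le
          (hcont.intervalIntegrable _ _)
          (Continuous.intervalIntegrable (by continuity) _ _)
        intro x hx
        have hx1 : 1 ≤ x := hx.1
        have h2s : Real.cosh x ≤ 2 * Real.sinh x := two_sinh_ge x hx1
        have hpow : Real.cosh x ^ q = Real.cosh x ^ (q - 1) * Real.cosh x := by
          rw [← pow_succ]
          congr 1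
          omega
        rw [hpow]
        have hcnn : (0:ℝ) ≤ Real.cosh x ^ (q - 1) := by positivity
        calc Real.cosh x ^ (q - 1) * Real.cosh x
            ≤ Real.cosh x ^ (q - 1) * (2 * Real.sinh x) :=
              mul_le_mul_of_nonneg_left h2s hcnn
          _ = 2 / ↑q * (↑q * Real.cosh x ^ (q - 1) * Real.sinh x) := by
              field_simp
      have hintc : ∫ s in (1:ℝ)..r, (2 / q) * ((q : ℝ) * Real.cosh s ^ (q - 1) * Real.sinh s)
          = (2 / q) * (Real.cosh r ^ q - Real.cosh 1 ^ q) := by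
        rw [intervalIntegral.integral_const_mul, cosh_pow_integral_deriv]
      rw [hintc] at hmono
      have hc1 : (0:ℝ) ≤ Real.cosh 1 ^ q := by positivity
      calc (∫ s in (1:ℝ)..r, Real.cosh s ^ q)
          ≤ (2 / q) * (Real.cosh r ^ q - Real.cosh 1 ^ q) := hmono
        _ ≤ (2 / q) * Real.cosh r ^ q := by
            apply mul_le_mul_of_nonneg_left (by linarith) (by positivity)
        _ = 2 * Real.cosh r ^ q / q := by ring
    linarith [hsplit, h01, h1r]
end

section
/- With a_k(r,λ) as above and for all r > arctanh(1/2), a_k(r,λ) ≤ ∫₀^r cosh(s)^k ds, and b_k(r,λ) ≤ 1/λ + 2λ ∫₀^r cosh(s)^k ds. -/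
open intervalIntegral Real

/-- The inverse hyperbolic tangent. -/
noncomputable def arctanh (x : ℝ) : ℝ := Real.log ((1 + x) / (1 - x)) / 2

/-- The cosine coefficient `a_k(r,λ)`. -/
noncomputable def acoeff (k : ℕ) (r lam : ℝ) : ℝ :=
  (2:ℝ) ^ (-(k:ℝ)) * ∑ j ∈ Finset.range (k + 1),
    (k.choose j : ℝ) * ((2 * (j:ℝ) - k) * Real.sinh ((2 * (j:ℝ) - k) * r)) /
      ((2 * (j:ℝ) - k) ^ 2 + lam ^ 2)

/-- The sine coefficient `b_k(r,λ)`. -/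
noncomputable def bcoeff (k : ℕ) (r lam : ℝ) : ℝ :=
  lam * (2:ℝ) ^ (-(k:ℝ)) * ∑ j ∈ Finset.range (k + 1),
    (k.choose j : ℝ) * Real.cosh ((2 * (j:ℝ) - k) * r) /
      ((2 * (j:ℝ) - k) ^ 2 + lam ^ 2)


/-! Expanding `cosh s = (eˢ + e⁻ˢ)/2` binomially gives
`cosh s ^ k = 2⁻ᵏ ∑ⱼ C(k,j) cosh((2j-k)s)`, so `∫₀ʳ cosh s ^ k` is the same binomial average
of `∫₀ʳ cosh(ms) = sinh(mr)/m` (or `r` when `m = 0`) over the integer frequencies `m = 2j - k`,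
and both inequalities can be checked frequency by frequency. For `a_k` this is
`m sinh(mr)/(m² + λ²) ≤ sinh(mr)/m`. For `b_k`, the frequency `m = 0` contributes exactly `1/λ`;
for `m ≠ 0` one has `m² + λ² ≥ |m|`, and `cosh x ≤ 2 sinh x` once `tanh x ≥ 1/2`, that is
once `x ≥ arctanh(1/2) = log 3 / 2`. -/

lemma arctanh_one_half : arctanh (1 / 2) = log 3 / 2 := by
  norm_num [arctanh]

lemma log_three_div_two_nonneg : 0 ≤ log 3 / 2 := by
  positivity [log_pos (by norm_num : (1:ℝ) < 3)]

lemma cosh_le_two_mul_sinh {x : ℝ} (hx : log 3 / 2 ≤ x) : cosh x ≤ 2 * sinh x := by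
  have h3 : 3 ≤ exp x * exp x := by
    rw [← exp_add, ← exp_log (by norm_num : (0:ℝ) < 3)]
    exact exp_le_exp.mpr (by linarith)
  have hinv : exp x * exp (-x) = 1 := by rw [← exp_add, add_neg_cancel, exp_zero]
  rw [cosh_eq, sinh_eq]
  nlinarith [exp_pos x, exp_pos (-x)]

lemma sum_choose_mul_exp (k : ℕ) (s : ℝ) :
    ∑ j ∈ Finset.range (k + 1), (k.choose j : ℝ) * exp ((2 * (j:ℝ) - k) * s)
      = (exp s + exp (-s)) ^ k := by
  rw [add_pow]
  refine Finset.sum_congr rfl fun j hj => ?_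
  rw [← exp_nat_mul, ← exp_nat_mul, ← exp_add,
    Nat.cast_sub (Nat.lt_succ_iff.mp (Finset.mem_range.mp hj))]
  ring_nf

lemma cosh_pow_eq_sum (k : ℕ) (s : ℝ) :
    cosh s ^ k = (2:ℝ) ^ (-(k:ℝ)) * ∑ j ∈ Finset.range (k + 1),
      (k.choose j : ℝ) * cosh ((2 * (j:ℝ) - k) * s) := by
  have hneg := sum_choose_mul_exp k (-s)
  simp only [mul_neg, neg_neg] at hneg
  simp only [cosh_eq, mul_div_assoc', ← Finset.sum_div, mul_add, Finset.sum_add_distrib,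
    sum_choose_mul_exp, hneg, div_pow, rpow_neg zero_le_two, rpow_natCast]
  ring

lemma integral_cosh_mul {m : ℝ} (hm : m ≠ 0) (r : ℝ) :
    ∫ s in (0:ℝ)..r, cosh (m * s) = sinh (m * r) / m := by
  rw [integral_comp_mul_left (fun s => cosh s) hm,
    integral_eq_sub_of_hasDerivAt (fun x _ => hasDerivAt_sinh x)
      (continuous_cosh.intervalIntegrable _ _)]
  simp [div_eq_inv_mul]

lemma integral_cosh_pow_eq_sum (k : ℕ) (r : ℝ) :
    ∫ s in (0:ℝ)..r, cosh s ^ k = (2:ℝ) ^ (-(k:ℝ)) * ∑ j ∈ Finset.range (k + 1),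
      (k.choose j : ℝ) * ∫ s in (0:ℝ)..r, cosh ((2 * (j:ℝ) - k) * s) := by
  simp_rw [cosh_pow_eq_sum k, integral_const_mul]
  rw [integral_finsetSum fun j _ => (by fun_prop : Continuous _).intervalIntegrable 0 r]
  simp_rw [integral_const_mul]

lemma mul_sinh_div_le_integral_cosh_mul {r : ℝ} (hr : 0 ≤ r) (m lam : ℝ) :
    m * sinh (m * r) / (m ^ 2 + lam ^ 2) ≤ ∫ s in (0:ℝ)..r, cosh (m * s) := by
  rcases eq_or_ne m 0 with rfl | hm
  · simpa using hr
  have hnum : 0 ≤ m * sinh (m * r) := by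
    rcases hm.lt_or_gt with hneg | hpos
    · exact mul_nonneg_of_nonpos_of_nonpos hneg.le
        (sinh_nonpos_iff.mpr (mul_nonpos_of_nonpos_of_nonneg hneg.le hr))
    · exact mul_nonneg hpos.le (sinh_nonneg_iff.mpr (mul_nonneg hpos.le hr))
  calc m * sinh (m * r) / (m ^ 2 + lam ^ 2) ≤ m * sinh (m * r) / m ^ 2 :=
        div_le_div_of_nonneg_left hnum (by positivity) (by nlinarith [sq_nonneg lam])
    _ = ∫ s in (0:ℝ)..r, cosh (m * s) := by
        rw [integral_cosh_mul hm, sq, mul_div_mul_left _ _ hm]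

lemma cosh_div_le_two_mul_sinh_div {m r : ℝ} (hm : 1 ≤ m) (hr : log 3 / 2 ≤ r) (lam : ℝ) :
    cosh (m * r) / (m ^ 2 + lam ^ 2) ≤ 2 * (sinh (m * r) / m) := by
  have hr0 : 0 ≤ r := log_three_div_two_nonneg.trans hr
  have hmr : log 3 / 2 ≤ m * r := hr.trans (le_mul_of_one_le_left hr0 hm)
  rw [mul_div_assoc']
  exact div_le_div₀ (by linarith [cosh_le_two_mul_sinh hmr, cosh_pos (m * r)])
    (cosh_le_two_mul_sinh hmr) (by linarith) (by nlinarith [sq_nonneg lam])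

lemma mul_cosh_div_le_integral_cosh_mul (m : ℤ) {r lam : ℝ} (hlam : 0 < lam)
    (hr : log 3 / 2 ≤ r) :
    lam * cosh (m * r) / ((m : ℝ) ^ 2 + lam ^ 2)
      ≤ 1 / lam + 2 * lam * ∫ s in (0:ℝ)..r, cosh (m * s) := by
  have hr0 : 0 ≤ r := log_three_div_two_nonneg.trans hr
  rcases eq_or_ne m 0 with rfl | hm
  · simp only [Int.cast_zero, zero_mul, cosh_zero, integral_const, sub_zero, smul_eq_mul,
      mul_one]
    rw [zero_pow two_ne_zero, zero_add, sq, ← div_div, div_self hlam.ne']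
    exact le_add_of_nonneg_right (by positivity)
  have habs : (1:ℝ) ≤ |(m:ℝ)| := by exact_mod_cast Int.one_le_abs hm
  have heven : sinh (m * r) / m = sinh (|(m:ℝ)| * r) / |(m:ℝ)| := by
    rcases abs_choice (m:ℝ) with h | h <;> rw [h]
    rw [neg_mul, sinh_neg, neg_div_neg_eq]
  calc lam * cosh (m * r) / ((m : ℝ) ^ 2 + lam ^ 2)
      = lam * (cosh (|(m:ℝ)| * r) / (|(m:ℝ)| ^ 2 + lam ^ 2)) := by
        rw [sq_abs, ← cosh_abs, abs_mul, abs_of_nonneg hr0, mul_div_assoc]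
    _ ≤ lam * (2 * (sinh (|(m:ℝ)| * r) / |(m:ℝ)|)) :=
        mul_le_mul_of_nonneg_left (cosh_div_le_two_mul_sinh_div habs hr lam) hlam.le
    _ ≤ 1 / lam + 2 * lam * ∫ s in (0:ℝ)..r, cosh (m * s) := by
        rw [integral_cosh_mul (by exact_mod_cast hm), heven]
        linarith [one_div_pos.mpr hlam]

lemma two_rpow_neg_mul_sum_choose_mul (k : ℕ) (c : ℝ) :
    (2:ℝ) ^ (-(k:ℝ)) * ∑ j ∈ Finset.range (k + 1), (k.choose j : ℝ) * c = c := by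
  rw [← Finset.sum_mul, ← Nat.cast_sum, Nat.sum_range_choose, rpow_neg zero_le_two,
    rpow_natCast, Nat.cast_pow, Nat.cast_two, ← mul_assoc, inv_mul_cancel₀ (by positivity),
    one_mul]

theorem acoeff_bcoeff_bounds (k : ℕ) (r lam : ℝ) (hlam : 0 < lam)
    (hr : arctanh (1/2) < r) :
    acoeff k r lam ≤ ∫ s in (0:ℝ)..r, Real.cosh s ^ k ∧
    bcoeff k r lam ≤ 1 / lam + 2 * lam * ∫ s in (0:ℝ)..r, Real.cosh s ^ k := by
  rw [arctanh_one_half] at hr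
  have hr0 : 0 ≤ r := log_three_div_two_nonneg.trans hr.le
  have hfreq (j : ℕ) : 2 * (j:ℝ) - k = ((2 * j - k : ℤ) : ℝ) := by push_cast; ring
  rw [acoeff, bcoeff, integral_cosh_pow_eq_sum]
  constructor
  · gcongr with j
    rw [mul_div_assoc]
    gcongr
    exact mul_sinh_div_le_integral_cosh_mul hr0 _ lam
  · calc lam * (2:ℝ) ^ (-(k:ℝ)) * ∑ j ∈ Finset.range (k + 1),
          (k.choose j : ℝ) * cosh ((2 * (j:ℝ) - k) * r) / ((2 * (j:ℝ) - k) ^ 2 + lam ^ 2)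
        = (2:ℝ) ^ (-(k:ℝ)) * ∑ j ∈ Finset.range (k + 1), (k.choose j : ℝ) *
            (lam * cosh ((2 * (j:ℝ) - k) * r) / ((2 * (j:ℝ) - k) ^ 2 + lam ^ 2)) := by
          rw [mul_comm lam, mul_assoc, Finset.mul_sum]
          exact congrArg _ (Finset.sum_congr rfl fun j _ => by ring)
      _ ≤ (2:ℝ) ^ (-(k:ℝ)) * ∑ j ∈ Finset.range (k + 1), (k.choose j : ℝ) *
            (1 / lam + 2 * lam * ∫ s in (0:ℝ)..r, cosh ((2 * (j:ℝ) - k) * s)) := by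
          gcongr with j
          simpa only [hfreq] using mul_cosh_div_le_integral_cosh_mul (2 * j - k) hlam hr.le
      _ = _ := by
          simp only [mul_add, Finset.sum_add_distrib, two_rpow_neg_mul_sum_choose_mul]
          simp only [mul_left_comm _ (2 * lam), ← Finset.mul_sum]
end

section
/- Let R_o ≥ 0 and let α, β : [R_o, +∞) → ℝ be bounded continuous functions with α(r) → a and β(r) → b as r → +∞. Then for every λ > 0, (1/R) ∫_{R_o}^R (α(r) cos(λr) + β(r) sin(λr))² dr converges to (a² + b²)/2 as R → +∞. -/
/-!
Expanding the square, `(x cos θ + y sin θ)² = (x² + y²)/2 + (x² - y²)/2 · cos 2θ + xy · sin 2θ`.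
For constant coefficients `a, b` the two oscillating terms have bounded primitives, so
`∫_{R₀}^R (a cos λr + b sin λr)² dr = (a² + b²)/2 · R + O(1)`. The actual integrand differs from
this model by a function tending to `0`, and by the Cesàro argument its integral is `o(R)`.
-/

open Filter Real intervalIntegral

open MeasureTheory Set Asymptotics Topology

theorem MeasureTheory.LocallyIntegrableOn.intervalIntegrable_of_Ici {E : Type*}
    [NormedAddCommGroup E] {f : ℝ → E} {R₀ a b : ℝ} (hf : LocallyIntegrableOn f (Ici R₀))
    (ha : R₀ ≤ a) (hb : R₀ ≤ b) : IntervalIntegrable f volume a b :=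
  (hf.integrableOn_compact_subset (fun _ hx => (le_min ha hb).trans hx.1)
    isCompact_uIcc).intervalIntegrable

theorem integral_isLittleO_id_of_tendsto_zero {E : Type*} [NormedAddCommGroup E]
    [NormedSpace ℝ E] {f : ℝ → E} {R₀ : ℝ} (hf : LocallyIntegrableOn f (Ici R₀))
    (h : Tendsto f atTop (𝓝 0)) :
    (fun R => ∫ r in R₀..R, f r) =o[atTop] id := by
  refine isLittleO_iff.2 fun ε hε => ?_
  obtain ⟨S, hS⟩ := eventually_atTop.1 <|
    ((tendsto_zero_iff_norm_tendsto_zero.1 h).eventually (ge_mem_nhds (half_pos hε))).and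
      ((eventually_ge_atTop R₀).and (eventually_ge_atTop 0))
  obtain ⟨-, hR₀S, hS0⟩ := hS S le_rfl
  have hhead : ∀ᶠ R in atTop, ‖∫ r in R₀..S, f r‖ ≤ ε / 2 * ‖R‖ :=
    (tendsto_norm_atTop_atTop.const_mul_atTop (half_pos hε)).eventually_ge_atTop _
  filter_upwards [eventually_ge_atTop S, hhead] with R hSR hhead
  have htail : ‖∫ r in S..R, f r‖ ≤ ε / 2 * ‖R‖ := calc
    _ ≤ ε / 2 * |R - S| :=
      norm_integral_le_of_norm_le_const fun r hr => (hS r (uIoc_of_le hSR ▸ hr).1.le).1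
    _ ≤ ε / 2 * ‖R‖ := by
      rw [abs_of_nonneg (sub_nonneg.2 hSR), Real.norm_of_nonneg (hS0.trans hSR)]
      gcongr
      linarith
  rw [← integral_add_adjacent_intervals (hf.intervalIntegrable_of_Ici le_rfl hR₀S)
    (hf.intervalIntegrable_of_Ici hR₀S (hR₀S.trans hSR))]
  calc _ ≤ _ := norm_add_le _ _
    _ ≤ ε * ‖id R‖ := by rw [id]; linarith

theorem integral_cos_mul_isBigO_one (R₀ : ℝ) {ω : ℝ} (hω : ω ≠ 0) {l : Filter ℝ} :
    (fun R => ∫ r in R₀..R, cos (ω * r)) =O[l] fun _ => (1 : ℝ) := by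
  refine .of_bound (2 / |ω|) (.of_forall fun R => ?_)
  rw [integral_comp_mul_left (fun x => cos x) hω, integral_cos, norm_smul, norm_inv, norm_one,
    mul_one, div_eq_inv_mul]
  simp only [Real.norm_eq_abs]
  gcongr
  linarith [abs_sub (sin (ω * R)) (sin (ω * R₀)), abs_sin_le_one (ω * R), abs_sin_le_one (ω * R₀)]

theorem integral_sin_mul_isBigO_one (R₀ : ℝ) {ω : ℝ} (hω : ω ≠ 0) {l : Filter ℝ} :
    (fun R => ∫ r in R₀..R, sin (ω * r)) =O[l] fun _ => (1 : ℝ) := by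
  refine .of_bound (2 / |ω|) (.of_forall fun R => ?_)
  rw [integral_comp_mul_left (fun x => sin x) hω, integral_sin, norm_smul, norm_inv, norm_one,
    mul_one, div_eq_inv_mul]
  simp only [Real.norm_eq_abs]
  gcongr
  linarith [abs_sub (cos (ω * R₀)) (cos (ω * R)), abs_cos_le_one (ω * R), abs_cos_le_one (ω * R₀)]

theorem abs_mul_cos_add_mul_sin_le (x y θ : ℝ) : |x * cos θ + y * sin θ| ≤ |x| + |y| := calc
  _ ≤ |x| * |cos θ| + |y| * |sin θ| := by
    simpa only [abs_mul] using abs_add_le (x * cos θ) (y * sin θ)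
  _ ≤ |x| + |y| := add_le_add (mul_le_of_le_one_right (abs_nonneg x) (abs_cos_le_one θ))
    (mul_le_of_le_one_right (abs_nonneg y) (abs_sin_le_one θ))

theorem mul_cos_add_mul_sin_sq (x y θ : ℝ) :
    (x * cos θ + y * sin θ) ^ 2
      = (x ^ 2 + y ^ 2) / 2 + (x ^ 2 - y ^ 2) / 2 * cos (2 * θ) + x * y * sin (2 * θ) := by
  rw [cos_two_mul, sin_two_mul]
  linear_combination y ^ 2 * sin_sq_add_cos_sq θ

theorem tendsto_mul_cos_add_mul_sin_sq_sub {ι : Type*} {l : Filter ι} {u v θ : ι → ℝ} {x y : ℝ}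
    (hu : Tendsto u l (𝓝 x)) (hv : Tendsto v l (𝓝 y)) :
    Tendsto (fun i => (u i * cos (θ i) + v i * sin (θ i)) ^ 2
      - (x * cos (θ i) + y * sin (θ i)) ^ 2) l (𝓝 0) := by
  refine squeeze_zero_norm (a := fun i => (|u i + x| + |v i + y|) * (|u i - x| + |v i - y|))
    (fun i => ?_) ?_
  · rw [sq_sub_sq, norm_mul, Real.norm_eq_abs, Real.norm_eq_abs]
    gcongr
    · exact (abs_mul_cos_add_mul_sin_le (u i + x) (v i + y) (θ i)).trans_eq' (by ring_nf)
    · exact (abs_mul_cos_add_mul_sin_le (u i - x) (v i - y) (θ i)).trans_eq' (by ring_nf)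
  · simpa using (((hu.add_const x).abs.add (hv.add_const y).abs).mul
      ((hu.sub_const x).abs.add (hv.sub_const y).abs))

theorem integral_mul_cos_add_mul_sin_sq_sub_isBigO (R₀ a b : ℝ) {ω : ℝ} (hω : ω ≠ 0)
    {l : Filter ℝ} :
    (fun R => (∫ r in R₀..R, (a * cos (ω * r) + b * sin (ω * r)) ^ 2) - (a ^ 2 + b ^ 2) / 2 * R)
      =O[l] fun _ => (1 : ℝ) := by
  have h2ω : 2 * ω ≠ 0 := mul_ne_zero two_ne_zero hω
  have hint (R : ℝ) : ∫ r in R₀..R, (a * cos (ω * r) + b * sin (ω * r)) ^ 2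
      = (a ^ 2 + b ^ 2) / 2 * (R - R₀) + (a ^ 2 - b ^ 2) / 2 * (∫ r in R₀..R, cos (2 * ω * r))
        + a * b * ∫ r in R₀..R, sin (2 * ω * r) := by
    simp_rw [mul_cos_add_mul_sin_sq, ← mul_assoc]
    rw [intervalIntegral.integral_add, intervalIntegral.integral_add,
      intervalIntegral.integral_const, intervalIntegral.integral_const_mul,
      intervalIntegral.integral_const_mul, smul_eq_mul, mul_comm (R - R₀)]
    all_goals apply Continuous.intervalIntegrable; fun_prop
  simp_rw [hint]
  refine (((isBigO_const_const (-((a ^ 2 + b ^ 2) / 2 * R₀)) one_ne_zero l).add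
    ((integral_cos_mul_isBigO_one R₀ h2ω).const_mul_left ((a ^ 2 - b ^ 2) / 2))).add
    ((integral_sin_mul_isBigO_one R₀ h2ω).const_mul_left (a * b))).congr_left fun R => ?_
  ring

theorem tendsto_one_div_mul_of_sub_isLittleO {G : ℝ → ℝ} {c : ℝ}
    (h : (fun R => G R - c * R) =o[atTop] id) :
    Tendsto (fun R => 1 / R * G R) atTop (𝓝 c) := by
  refine tendsto_sub_nhds_zero_iff.1 (h.tendsto_div_nhds_zero.congr' ?_)
  filter_upwards [eventually_ne_atTop 0] with R hR
  simp only [id]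
  field_simp

theorem trig_average_limit_general (R₀ : ℝ) (α β : ℝ → ℝ) (a b : ℝ)
    (hαc : ContinuousOn α (Set.Ici R₀)) (hβc : ContinuousOn β (Set.Ici R₀))
    (hαa : Tendsto α atTop (nhds a)) (hβb' : Tendsto β atTop (nhds b))
    (lam : ℝ) (hlam : 0 < lam) :
    Tendsto (fun R => (1 / R) *
        ∫ r in R₀..R, (α r * Real.cos (lam * r) + β r * Real.sin (lam * r)) ^ 2)
      atTop (nhds ((a ^ 2 + b ^ 2) / 2)) := by
  set F := fun r => (α r * cos (lam * r) + β r * sin (lam * r)) ^ 2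
  set P := fun r => (a * cos (lam * r) + b * sin (lam * r)) ^ 2
  have hF : ContinuousOn F (Ici R₀) := by fun_prop
  have hP : Continuous P := by fun_prop
  have hFP : (fun R => ∫ r in R₀..R, (F r - P r)) =o[atTop] id :=
    integral_isLittleO_id_of_tendsto_zero ((hF.sub hP.continuousOn).locallyIntegrableOn
      measurableSet_Ici) (tendsto_mul_cos_add_mul_sin_sq_sub hαa hβb')
  have hPK := (integral_mul_cos_add_mul_sin_sq_sub_isBigO R₀ a b hlam.ne').trans_isLittleO
    (isLittleO_const_id_atTop (1 : ℝ))
  refine tendsto_one_div_mul_of_sub_isLittleO ((hFP.add hPK).congr' ?_ .rfl)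
  filter_upwards [eventually_ge_atTop R₀] with R hR
  rw [integral_sub ((hF.mono Icc_subset_Ici_self).intervalIntegrable_of_Icc hR)
    (hP.intervalIntegrable _ _)]
  ring

theorem trig_average_limit (R₀ : ℝ) (hR₀ : 0 ≤ R₀) (α β : ℝ → ℝ) (a b : ℝ)
    (hαc : ContinuousOn α (Set.Ici R₀)) (hβc : ContinuousOn β (Set.Ici R₀))
    (hαb : ∃ M, ∀ r ≥ R₀, |α r| ≤ M) (hβb : ∃ M, ∀ r ≥ R₀, |β r| ≤ M)
    (hαa : Tendsto α atTop (nhds a)) (hβb' : Tendsto β atTop (nhds b))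
    (lam : ℝ) (hlam : 0 < lam) :
    Tendsto (fun R => (1 / R) *
        ∫ r in R₀..R, (α r * Real.cos (lam * r) + β r * Real.sin (lam * r)) ^ 2)
      atTop (nhds ((a ^ 2 + b ^ 2) / 2)) :=
  trig_average_limit_general R₀ α β a b hαc hβc hαa hβb' lam hlam
end
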